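/- Let Θ be a compact metric space, let g, h : Θ → ℝ be continuous, let (λ_n) be a sequence of nonnegative reals with λ_n → ∞, and for each n let θ_n ∈ Θ be a global minimizer of θ ↦ g(θ) + λ_n·h(θ) over Θ. Then every cluster point θ̄ of the sequence (θ_n) is a global minimizer of h over Θ, i.e., h(θ̄) ≤ h(θ) for all θ ∈ Θ. -/

import Mathlib

open Filter

/-!
Comparing the minimizer `θₙ` with an arbitrary `θ` gives
`h θₙ ≤ h θ + (g θ - inf g) / λₙ`, and `inf g` is finite by compactness, so the
penalty term vanishes as `λₙ → ∞`. Hence for every `ε > 0` the sequence eventually lies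
in the closed sublevel set `{h ≤ h θ + ε}`, and so does each of its cluster points.
-/

lemma le_add_div_of_add_mul_le {α : Type*} {g h : α → ℝ} {c m : ℝ} {x y : α}
    (hc : 0 < c) (hm : m ≤ g x) (hmin : g x + c * h x ≤ g y + c * h y) :
    h x ≤ h y + (g y - m) / c := by
  rw [← sub_le_iff_le_add', le_div_iff₀ hc]
  nlinarith

lemma eventually_le_add_of_minimizers {ι α : Type*} {l : Filter ι} {g h : α → ℝ}
    (hg : BddBelow (Set.range g)) {lam : ι → ℝ} (hlam : Tendsto lam l atTop) {u : ι → α}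
    (hmin : ∀ i, ∀ y, g (u i) + lam i * h (u i) ≤ g y + lam i * h y)
    (y : α) {ε : ℝ} (hε : 0 < ε) :
    ∀ᶠ i in l, h (u i) ≤ h y + ε := by
  obtain ⟨m, hm⟩ := hg
  have hpenalty : Tendsto (fun i => (g y - m) / lam i) l (nhds 0) :=
    tendsto_const_nhds.div_atTop hlam
  filter_upwards [hlam.eventually_gt_atTop 0, hpenalty.eventually_lt_const hε] with i hpos hsmall
  calc h (u i) ≤ h y + (g y - m) / lam i :=
        le_add_div_of_add_mul_le hpos (hm (Set.mem_range_self _)) (hmin i y)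
    _ ≤ h y + ε := by linarith

lemma le_of_mapClusterPt_of_eventually_le {ι X : Type*} [TopologicalSpace X] {l : Filter ι}
    {f : X → ℝ} (hf : Continuous f) {u : ι → X} {x : X} (hx : MapClusterPt x l u) {c : ℝ}
    (hle : ∀ᶠ i in l, f (u i) ≤ c) : f x ≤ c :=
  (isClosed_le hf continuous_const).mem_of_mapClusterPt hx hle

theorem clusterPt_of_minimizers_minimizes_h_general {Θ : Type*} [MetricSpace Θ] [CompactSpace Θ]
    (g h : Θ → ℝ) (hg : Continuous g) (hh : Continuous h)
    (lam : ℕ → ℝ)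
    (hlam : Tendsto lam atTop atTop)
    (θseq : ℕ → Θ)
    (hmin : ∀ n, ∀ θ : Θ, g (θseq n) + lam n * h (θseq n) ≤ g θ + lam n * h θ)
    (θbar : Θ) (hcluster : MapClusterPt θbar atTop θseq) :
    ∀ θ : Θ, h θbar ≤ h θ := by
  intro θ
  have hg_bdd : BddBelow (Set.range g) := (isCompact_range hg).bddBelow
  refine le_of_forall_pos_le_add fun ε hε => ?_
  exact le_of_mapClusterPt_of_eventually_le hh hcluster
    (eventually_le_add_of_minimizers hg_bdd hlam hmin θ hε)

/-- If `Θ` is a compact metric space, `g h : Θ → ℝ` are continuous, `λₙ ≥ 0` with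
`λₙ → ∞`, and each `θₙ` globally minimizes `θ ↦ g θ + λₙ * h θ`, then every cluster
point of `(θₙ)` is a global minimizer of `h`. -/
theorem clusterPt_of_minimizers_minimizes_h {Θ : Type*} [MetricSpace Θ] [CompactSpace Θ]
    (g h : Θ → ℝ) (hg : Continuous g) (hh : Continuous h)
    (lam : ℕ → ℝ) (hlam_nonneg : ∀ n, 0 ≤ lam n)
    (hlam : Tendsto lam atTop atTop)
    (θseq : ℕ → Θ)
    (hmin : ∀ n, ∀ θ : Θ, g (θseq n) + lam n * h (θseq n) ≤ g θ + lam n * h θ)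
    (θbar : Θ) (hcluster : MapClusterPt θbar atTop θseq) :
    ∀ θ : Θ, h θbar ≤ h θ :=
  clusterPt_of_minimizers_minimizes_h_general g h hg hh lam hlam θseq hmin θbar hcluster
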